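/- arXiv:2405.04255 — 2 statements merged into one kernel-verified Lean document; each statement's English description precedes it below -/
import Mathlib

section
/- The metric g = (c²+u²)dt² + du² on I × J (c > 0 constant) has Gauss curvature K(t,u) = -c²/(c²+u²)², and this K satisfies the Ricci condition K·ΔK - ‖∇K‖² - 4K³ = 0, where Δ and ∇ are taken with respect to g. -/
/-! With `ρ = √(c² + u²)` one has `ρ'' = c²/ρ³`, so `K = -ρ''/ρ = -c²/ρ⁴`, `K' = 4c²u/ρ⁶` and
`ΔK = ρ⁻¹(ρ K')' = 4c²(c² - 4u²)/ρ⁸`. Multiplied by `ρ¹²`, the Ricci expression becomes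
`-4c⁴(c² - 4u²) - 16c⁴u² + 4c⁶ = 0`. -/

/-- Euclidean dot product on `ℝ³`. -/
def dot3 (v w : Fin 3 → ℝ) : ℝ := v 0 * w 0 + v 1 * w 1 + v 2 * w 2

/-- Cross product on `ℝ³`. -/
def cross3 (v w : Fin 3 → ℝ) : Fin 3 → ℝ :=
  ![v 1 * w 2 - v 2 * w 1, v 2 * w 0 - v 0 * w 2, v 0 * w 1 - v 1 * w 0]

/-- Euclidean norm on `ℝ³`. -/
noncomputable def norm3 (v : Fin 3 → ℝ) : ℝ := Real.sqrt (dot3 v v)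

open Real

/- Gauss curvature of the metric `ρ(u)² dt² + du²`, and its Laplacian on functions of `u` alone. -/
noncomputable def warpedGaussCurvature (ρ : ℝ → ℝ) (u : ℝ) : ℝ :=
  -deriv (deriv ρ) u / ρ u

noncomputable def warpedLaplacian (ρ f : ℝ → ℝ) (u : ℝ) : ℝ :=
  1 / ρ u * deriv (fun v => ρ v * deriv f v) u

section

variable {c : ℝ}

theorem sq_add_sq_pos (hc : c ≠ 0) (u : ℝ) : 0 < c ^ 2 + u ^ 2 := by positivity

theorem hasDerivAt_sq_add_sq (u : ℝ) : HasDerivAt (fun v => c ^ 2 + v ^ 2) (2 * u) u := by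
  simpa using (hasDerivAt_pow 2 u).const_add (c ^ 2)

theorem hasDerivAt_sqrt_sq_add_sq (hc : c ≠ 0) (u : ℝ) :
    HasDerivAt (fun v => √(c ^ 2 + v ^ 2)) (u / √(c ^ 2 + u ^ 2)) u := by
  refine ((hasDerivAt_sq_add_sq u).sqrt (sq_add_sq_pos hc u).ne').congr_deriv ?_
  field_simp

theorem deriv_deriv_sqrt_sq_add_sq (hc : c ≠ 0) (u : ℝ) :
    deriv (deriv fun v => √(c ^ 2 + v ^ 2)) u = c ^ 2 / √(c ^ 2 + u ^ 2) ^ 3 := by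
  have hρ : √(c ^ 2 + u ^ 2) ≠ 0 := (sqrt_pos.2 (sq_add_sq_pos hc u)).ne'
  have hρ_sq : √(c ^ 2 + u ^ 2) ^ 2 = c ^ 2 + u ^ 2 := sq_sqrt (sq_add_sq_pos hc u).le
  have hquot : HasDerivAt (fun v => v / √(c ^ 2 + v ^ 2))
      ((1 * √(c ^ 2 + u ^ 2) - u * (u / √(c ^ 2 + u ^ 2))) / √(c ^ 2 + u ^ 2) ^ 2) u :=
    (hasDerivAt_id u).div (hasDerivAt_sqrt_sq_add_sq hc u) hρ
  rw [funext fun v => (hasDerivAt_sqrt_sq_add_sq hc v).deriv, hquot.deriv]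
  field_simp
  linear_combination hρ_sq

theorem warpedGaussCurvature_sqrt_sq_add_sq (hc : c ≠ 0) (u : ℝ) :
    warpedGaussCurvature (fun v => √(c ^ 2 + v ^ 2)) u = -c ^ 2 / (c ^ 2 + u ^ 2) ^ 2 := by
  have hρ_sq : √(c ^ 2 + u ^ 2) ^ 2 = c ^ 2 + u ^ 2 := sq_sqrt (sq_add_sq_pos hc u).le
  have hρ : √(c ^ 2 + u ^ 2) ≠ 0 := (sqrt_pos.2 (sq_add_sq_pos hc u)).ne'
  rw [warpedGaussCurvature, deriv_deriv_sqrt_sq_add_sq hc u]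
  field_simp
  linear_combination (√(c ^ 2 + u ^ 2) ^ 2 + (c ^ 2 + u ^ 2)) * hρ_sq

theorem hasDerivAt_neg_sq_div_sq_add_sq_sq (hc : c ≠ 0) (u : ℝ) :
    HasDerivAt (fun v => -c ^ 2 / (c ^ 2 + v ^ 2) ^ 2) (4 * c ^ 2 * u / (c ^ 2 + u ^ 2) ^ 3) u := by
  have hE := (sq_add_sq_pos hc u).ne'
  refine ((hasDerivAt_const u (-c ^ 2)).fun_div ((hasDerivAt_sq_add_sq u).fun_pow 2)
    (pow_ne_zero 2 hE)).congr_deriv ?_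
  field_simp
  ring

theorem warpedLaplacian_sqrt_sq_add_sq (hc : c ≠ 0) (u : ℝ) :
    warpedLaplacian (fun v => √(c ^ 2 + v ^ 2)) (fun v => -c ^ 2 / (c ^ 2 + v ^ 2) ^ 2) u =
      4 * c ^ 2 * (c ^ 2 - 4 * u ^ 2) / (c ^ 2 + u ^ 2) ^ 4 := by
  have hE := (sq_add_sq_pos hc u).ne'
  have hρ : √(c ^ 2 + u ^ 2) ≠ 0 := (sqrt_pos.2 (sq_add_sq_pos hc u)).ne'
  have hρ_sq : √(c ^ 2 + u ^ 2) ^ 2 = c ^ 2 + u ^ 2 := sq_sqrt (sq_add_sq_pos hc u).le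
  have hK' : HasDerivAt (fun v => 4 * c ^ 2 * v / (c ^ 2 + v ^ 2) ^ 3)
      ((4 * c ^ 2 * 1 * (c ^ 2 + u ^ 2) ^ 3 - 4 * c ^ 2 * u * (3 * (c ^ 2 + u ^ 2) ^ 2 * (2 * u)))
        / ((c ^ 2 + u ^ 2) ^ 3) ^ 2) u := by
    simpa using ((hasDerivAt_id u).const_mul (4 * c ^ 2)).fun_div
      ((hasDerivAt_sq_add_sq u).fun_pow 3) (pow_ne_zero 3 hE)
  rw [warpedLaplacian, funext fun v => (hasDerivAt_neg_sq_div_sq_add_sq_sq hc v).deriv]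
  beta_reduce
  rw [((hasDerivAt_sqrt_sq_add_sq hc u).fun_mul hK').deriv]
  field_simp
  linear_combination (-u ^ 2) * hρ_sq

end

/-- For the metric `g = (c²+u²)dt² + du²` (so `E = c²+u²`, `G = 1`), the Gauss curvature is
`K = -(√E)''/√E`, the Laplacian of a function of `u` alone is `Δf = (1/√E)(√E f')'`
and `‖∇f‖² = (f')²`. -/
theorem stmt_4 (c : ℝ) (hc : 0 < c) (K : ℝ → ℝ)
    (hK : ∀ u, K u = -c ^ 2 / (c ^ 2 + u ^ 2) ^ 2) :
    ∀ u : ℝ,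
      (-(deriv (deriv (fun v => Real.sqrt (c ^ 2 + v ^ 2))) u) / Real.sqrt (c ^ 2 + u ^ 2)
          = K u) ∧
      K u * ((1 / Real.sqrt (c ^ 2 + u ^ 2))
            * deriv (fun v => Real.sqrt (c ^ 2 + v ^ 2) * deriv K v) u)
          - (deriv K u) ^ 2 - 4 * (K u) ^ 3 = 0 := by
  obtain rfl : K = fun v => -c ^ 2 / (c ^ 2 + v ^ 2) ^ 2 := funext hK
  intro u
  refine ⟨warpedGaussCurvature_sqrt_sq_add_sq hc.ne' u, ?_⟩
  change _ * warpedLaplacian (fun v => √(c ^ 2 + v ^ 2))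
    (fun v => -c ^ 2 / (c ^ 2 + v ^ 2) ^ 2) u - _ - _ = 0
  rw [warpedLaplacian_sqrt_sq_add_sq hc.ne' u, (hasDerivAt_neg_sq_div_sq_add_sq_sq hc.ne' u).deriv]
  field_simp [(sq_add_sq_pos hc.ne' u).ne']
  ring
end

section
/- The curve α(t) = (-cos(t)sech(t), -sin(t)sech(t), tanh(t) - t) has constant torsion equal to 1. -/
/-! Work in the cylindrical frame `(e_r(t), e_θ(t), e_z)` that turns with the curve, in which
`α = -sech t e_r + (tanh t - t) e_z`. Dot and cross products are computed coordinatewise in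
this frame, and differentiating only mixes its two horizontal coordinates, so `α'`, `α''`,
`α'''` and the torsion become polynomials in `sech t` and `tanh t`, subject to
`sech' = -sech tanh`, `tanh' = sech²` and `sech² + tanh² = 1`. One finds
`α' × α'' = 2 sech t (tanh t e_r + sech t e_z)`, whence `|α' × α''|² = 4 sech² t` and
`⟨α' × α'', α'''⟩ = -4 sech² t`. -/

open Real

/-- `a e_r(θ) + b e_θ(θ) + z e_z`. -/
noncomputable def cylFrame (θ a b z : ℝ) : Fin 3 → ℝ :=
  ![a * cos θ - b * sin θ, a * sin θ + b * cos θ, z]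

lemma norm3_sq (v : Fin 3 → ℝ) : norm3 v ^ 2 = dot3 v v :=
  sq_sqrt <| add_nonneg (add_nonneg (mul_self_nonneg _) (mul_self_nonneg _)) (mul_self_nonneg _)

section CylFrame

variable {θ a b z a' b' z' : ℝ}

lemma dot3_cylFrame :
    dot3 (cylFrame θ a b z) (cylFrame θ a' b' z') = a * a' + b * b' + z * z' := by
  simp only [dot3, cylFrame, Matrix.cons_val_zero, Matrix.cons_val_one, Matrix.cons_val_two,
    Matrix.head_cons, Matrix.tail_cons]
  linear_combination (a * a' + b * b') * sin_sq_add_cos_sq θ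

lemma cross3_cylFrame :
    cross3 (cylFrame θ a b z) (cylFrame θ a' b' z') =
      cylFrame θ (b * z' - z * b') (z * a' - a * z') (a * b' - b * a') := by
  ext i
  fin_cases i <;> simp only [cross3, cylFrame, Fin.zero_eta, Fin.mk_one, Fin.reduceFinMk,
    Matrix.cons_val_zero, Matrix.cons_val_one, Matrix.cons_val]
  · ring
  · ring
  · linear_combination (a * b' - b * a') * sin_sq_add_cos_sq θ

end CylFrame

/-- The frame turns with angular velocity `ω`, which mixes the two horizontal coordinates. -/
lemma hasDerivAt_cylFrame {θ a b z : ℝ → ℝ} {ω a' b' z' t : ℝ} (hθ : HasDerivAt θ ω t)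
    (ha : HasDerivAt a a' t) (hb : HasDerivAt b b' t) (hz : HasDerivAt z z' t) :
    HasDerivAt (fun u => cylFrame (θ u) (a u) (b u) (z u))
      (cylFrame (θ t) (a' - ω * b t) (b' + ω * a t) z') t := by
  rw [hasDerivAt_pi]
  intro i
  fin_cases i
  · refine ((ha.mul hθ.cos).sub (hb.mul hθ.sin)).congr_deriv ?_
    simp only [cylFrame, Fin.zero_eta, Matrix.cons_val_zero]
    ring
  · refine ((ha.mul hθ.sin).add (hb.mul hθ.cos)).congr_deriv ?_
    simp only [cylFrame, Fin.mk_one, Matrix.cons_val_one, Matrix.cons_val_zero]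
    ring
  · simpa only [cylFrame, Fin.reduceFinMk, Matrix.cons_val] using hz

noncomputable def sech (t : ℝ) : ℝ := (cosh t)⁻¹

lemma sech_ne_zero (t : ℝ) : sech t ≠ 0 := inv_ne_zero (cosh_pos t).ne'

lemma sech_sq_add_tanh_sq (t : ℝ) : sech t ^ 2 + tanh t ^ 2 = 1 := by
  have := cosh_pos t
  rw [sech, tanh_eq_sinh_div_cosh]
  field_simp
  linear_combination -cosh_sq' t

lemma hasDerivAt_sech (t : ℝ) : HasDerivAt sech (-(sech t * tanh t)) t :=
  ((hasDerivAt_cosh t).inv (cosh_pos t).ne').congr_deriv <| by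
    rw [sech, tanh_eq_sinh_div_cosh]
    field_simp

lemma hasDerivAt_tanh (t : ℝ) : HasDerivAt tanh (sech t ^ 2) t := by
  have := cosh_pos t
  rw [show tanh = fun u => sinh u / cosh u from funext tanh_eq_sinh_div_cosh]
  refine ((hasDerivAt_sinh t).div (hasDerivAt_cosh t) this.ne').congr_deriv ?_
  rw [sech]
  field_simp
  linear_combination cosh_sq_sub_sinh_sq t

namespace ConstTorsionCurve

noncomputable def curve (t : ℝ) : Fin 3 → ℝ := cylFrame t (-sech t) 0 (tanh t - t)

noncomputable def velocity (t : ℝ) : Fin 3 → ℝ :=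
  cylFrame t (sech t * tanh t) (-sech t) (-tanh t ^ 2)

noncomputable def acceleration (t : ℝ) : Fin 3 → ℝ :=
  cylFrame t (2 * sech t ^ 3) (2 * sech t * tanh t) (-2 * sech t ^ 2 * tanh t)

noncomputable def jerk (t : ℝ) : Fin 3 → ℝ :=
  cylFrame t (-6 * sech t ^ 3 * tanh t - 2 * sech t * tanh t)
    (4 * sech t ^ 3 - 2 * sech t * tanh t ^ 2) (4 * sech t ^ 2 * tanh t ^ 2 - 2 * sech t ^ 4)

lemma hasDerivAt_curve (t : ℝ) : HasDerivAt curve (velocity t) t := by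
  refine (hasDerivAt_cylFrame (hasDerivAt_id' t) (hasDerivAt_sech t).neg (hasDerivAt_const t 0)
    ((hasDerivAt_tanh t).sub (hasDerivAt_id' t))).congr_deriv ?_
  rw [velocity]
  congr 1
  · ring
  · simp
  · linear_combination sech_sq_add_tanh_sq t

lemma hasDerivAt_velocity (t : ℝ) : HasDerivAt velocity (acceleration t) t := by
  have hs := hasDerivAt_sech t
  have ht := hasDerivAt_tanh t
  refine (hasDerivAt_cylFrame (hasDerivAt_id' t) (hs.mul ht) hs.neg (ht.pow 2).neg).congr_deriv ?_
  rw [acceleration]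
  simp only [Pi.neg_apply, Pi.mul_apply]
  congr 1
  · linear_combination -sech t * sech_sq_add_tanh_sq t
  · ring
  · ring

lemma hasDerivAt_acceleration (t : ℝ) : HasDerivAt acceleration (jerk t) t := by
  have hs := hasDerivAt_sech t
  have ht := hasDerivAt_tanh t
  refine (hasDerivAt_cylFrame (hasDerivAt_id' t) ((hs.pow 3).const_mul 2)
    ((hs.const_mul 2).mul ht) (((hs.pow 2).const_mul (-2)).mul ht)).congr_deriv ?_
  rw [jerk]
  simp only [Pi.mul_apply, Pi.pow_apply]
  congr 1 <;> ring

lemma cross3_velocity_acceleration (t : ℝ) :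
    cross3 (velocity t) (acceleration t) = cylFrame t (2 * sech t * tanh t) 0 (2 * sech t ^ 2) := by
  rw [velocity, acceleration, cross3_cylFrame]
  congr 1
  · linear_combination 2 * sech t * tanh t * sech_sq_add_tanh_sq t
  · ring
  · linear_combination 2 * sech t ^ 2 * sech_sq_add_tanh_sq t

lemma dot3_cross3_velocity_acceleration_self (t : ℝ) :
    dot3 (cross3 (velocity t) (acceleration t)) (cross3 (velocity t) (acceleration t)) =
      4 * sech t ^ 2 := by
  rw [cross3_velocity_acceleration, dot3_cylFrame]
  linear_combination 4 * sech t ^ 2 * sech_sq_add_tanh_sq t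

lemma dot3_cross3_velocity_acceleration_jerk (t : ℝ) :
    dot3 (cross3 (velocity t) (acceleration t)) (jerk t) = -4 * sech t ^ 2 := by
  rw [cross3_velocity_acceleration, jerk, dot3_cylFrame]
  linear_combination -4 * sech t ^ 2 * (sech t ^ 2 + 1) * sech_sq_add_tanh_sq t

end ConstTorsionCurve

open ConstTorsionCurve

theorem stmt_15 (α : ℝ → Fin 3 → ℝ)
    (hα : ∀ t, α t = ![-(Real.cos t * (1 / Real.cosh t)),
                       -(Real.sin t * (1 / Real.cosh t)), Real.tanh t - t]) :
    ∀ t : ℝ,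
      -dot3 (cross3 (deriv α t) (deriv (deriv α) t)) (deriv (deriv (deriv α)) t)
          / (norm3 (cross3 (deriv α t) (deriv (deriv α) t))) ^ 2 = 1 := by
  have hcurve : α = curve := funext fun t => by
    rw [hα, curve, cylFrame, sech]
    ring_nf
  have hv : deriv α = velocity := hcurve ▸ funext fun t => (hasDerivAt_curve t).deriv
  have ha : deriv velocity = acceleration := funext fun t => (hasDerivAt_velocity t).deriv
  have hj : deriv acceleration = jerk := funext fun t => (hasDerivAt_acceleration t).deriv
  intro t
  rw [hv, ha, hj, norm3_sq, dot3_cross3_velocity_acceleration_jerk,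
    dot3_cross3_velocity_acceleration_self]
  field_simp [sech_ne_zero t]
end
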